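/- arXiv:2506.17889 — 3 statements merged into one kernel-verified Lean document; each statement's English description precedes it below -/
import Mathlib

section
/- Let ε = (ε₁, …, ε_{p−1}) ∈ {±1}^{p−1} and define μ(i) = 1 if ε_i = 1 and μ(i) = t if ε_i = −1 (with μ(0) = 0 by convention), working in the field of rational functions ℚ(x, t) (or the Laurent polynomial ring). Define C₀ = 1, C₁ = μ(1)²/t + x, and C_k = (μ(k)²/t + x)·C_{k−1} − (μ(k−1)μ(k)x/t)·C_{k−2} for k ≥ 2. Let α_k be the number of indices i ≤ k with ε_i = 1 and β_k = k − α_k. Then t^(α_k) · C_k is a polynomial in t of degree k (with coefficients that are Laurent polynomials in x), i.e., C_k = ∑_{i=0}^{k} C_k^i(x) · t^(i−α_k) for some Laurent polynomials C_k^i(x). -/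
/-!
Write `μ k = t ^ d k` with `d k ∈ {0, 1}`, so that `d 1 + ⋯ + d k = k - α k`. Each term of the
recurrence multiplies `C (k-1)` or `C (k-2)` by a monomial `t ^ s` (up to a factor `x`), which
shifts its `t`-support by `s`; with `0 ≤ d k ≤ 1` these shifts keep the support of `C k`
inside `[-α k, k - α k]`.
-/

open Finset LaurentPolynomial

namespace LaurentPolynomial

open AddMonoidAlgebra

variable {R : Type*}

section Semiring
variable [Semiring R]

theorem T_mul_mem_supported_Icc {f : R[T;T⁻¹]} {a b : ℤ}
    (hf : f ∈ supported R R (Set.Icc a b)) (s : ℤ) :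
    T s * f ∈ supported R R (Set.Icc (a + s) (b + s)) := by
  classical
  intro m hm
  obtain ⟨u, hu, rfl⟩ := Finset.mem_image.mp (support_coeff_single_mul_subset f 1 s hm)
  have := hf hu
  simp only [Set.mem_Icc] at this ⊢
  omega

theorem C_mul_mem_supported {f : R[T;T⁻¹]} {s : Set ℤ} (hf : f ∈ supported R R s) (r : R) :
    C r * f ∈ supported R R s := by
  rw [← smul_eq_C_mul]
  exact Submodule.smul_mem _ r hf

theorem one_mem_supported_Icc_zero : (1 : R[T;T⁻¹]) ∈ supported R R (Set.Icc 0 0) := by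
  rw [mem_supported']
  intro m hm
  rw [← T_zero, T_apply, if_neg]
  rintro rfl
  exact hm ⟨le_rfl, le_rfl⟩

theorem eq_sum_of_mem_supported_Icc {f : R[T;T⁻¹]} {m : ℤ} {n : ℕ}
    (hf : f ∈ supported R R (Set.Icc m (m + n))) :
    f = ∑ i ∈ range (n + 1), C (f.coeff (m + i)) * T (m + i) := by
  ext j
  simp only [coeff_sum, ← single_eq_C_mul_T, coeff_single, Finsupp.finsetSum_apply]
  by_cases hj : j ∈ Set.Icc m (m + n)
  · obtain ⟨hmj, hjn⟩ := hj
    rw [Finset.sum_eq_single (j - m).toNat, show m + ((j - m).toNat : ℤ) = j by omega,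
      Finsupp.single_eq_same]
    · intro i _ hi
      exact Finsupp.single_eq_of_ne (by omega)
    · intro hi
      simp only [mem_range] at hi
      omega
  · rw [mem_supported'.mp hf j hj]
    refine (Finset.sum_eq_zero fun i hi => Finsupp.single_eq_of_ne ?_).symm
    simp only [mem_range, Set.mem_Icc] at hi hj
    omega

theorem T_sq_mul_T_neg_one_add_C_mul_mem_supported_Icc (x : R) {d : ℤ} (hd : 0 ≤ d ∧ d ≤ 1)
    {f : R[T;T⁻¹]} {a b : ℤ} (hf : f ∈ supported R R (Set.Icc a b)) :
    (T d ^ 2 * T (-1) + C x) * f ∈ supported R R (Set.Icc (a + d - 1) (b + d)) := by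
  rw [add_mul, sq, mul_assoc, mul_assoc]
  refine add_mem (supported_mono ?_ (T_mul_mem_supported_Icc
    (T_mul_mem_supported_Icc (T_mul_mem_supported_Icc hf _) _) _))
    (supported_mono ?_ (C_mul_mem_supported hf x)) <;>
  exact Set.Icc_subset_Icc (by omega) (by omega)

theorem T_mul_T_mul_C_mul_T_neg_one_mul_mem_supported_Icc (x : R) (d d' : ℤ)
    {f : R[T;T⁻¹]} {a b : ℤ} (hf : f ∈ supported R R (Set.Icc a b)) :
    (T d * T d' * C x * T (-1)) * f ∈
      supported R R (Set.Icc (a + d + d' - 1) (b + d + d' - 1)) := by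
  simp only [mul_assoc]
  refine supported_mono ?_ (T_mul_mem_supported_Icc (T_mul_mem_supported_Icc
    (C_mul_mem_supported (T_mul_mem_supported_Icc hf _) x) _) _)
  exact Set.Icc_subset_Icc (by omega) (by omega)

end Semiring

theorem mem_supported_Icc_of_recurrence [Ring R] (x : R) (n : ℕ) (d : ℕ → ℤ)
    (hd : ∀ i, 1 ≤ i → i ≤ n → 0 ≤ d i ∧ d i ≤ 1)
    (μ : ℕ → R[T;T⁻¹]) (hμ : ∀ i, 1 ≤ i → i ≤ n → μ i = T (d i))
    (Cp : ℕ → R[T;T⁻¹]) (hC0 : Cp 0 = 1) (hC1 : Cp 1 = μ 1 ^ 2 * T (-1) + C x)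
    (hCk : ∀ k, 2 ≤ k → Cp k = (μ k ^ 2 * T (-1) + C x) * Cp (k - 1) -
      (μ (k - 1) * μ k * C x * T (-1)) * Cp (k - 2)) :
    ∀ k ≤ n,
      Cp k ∈ supported R R (Set.Icc ((∑ i ∈ Icc 1 k, d i) - k) (∑ i ∈ Icc 1 k, d i)) := by
  have hsum : ∀ k, ∑ i ∈ Icc 1 (k + 1), d i = ∑ i ∈ Icc 1 k, d i + d (k + 1) :=
    fun k => Finset.sum_Icc_succ_top (by omega) d
  have h₀ : Cp 0 ∈
      supported R R (Set.Icc ((∑ i ∈ Icc 1 0, d i) - (0 : ℕ)) (∑ i ∈ Icc 1 0, d i)) := by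
    simpa [hC0] using one_mem_supported_Icc_zero
  intro k
  induction k using Nat.twoStepInduction with
  | zero => exact fun _ => h₀
  | one =>
    intro hn
    rw [hC1, hμ 1 le_rfl hn, ← mul_one (_ + _), ← hC0]
    refine supported_mono ?_
      (T_sq_mul_T_neg_one_add_C_mul_mem_supported_Icc x (hd 1 le_rfl hn) h₀)
    rw [hsum 0, zero_add]
    exact Set.Icc_subset_Icc (by push_cast; omega) (by omega)
  | more k ih₀ ih₁ =>
    intro hn
    rw [hCk (k + 2) (by omega), show k + 2 - 1 = k + 1 by omega, show k + 2 - 2 = k by omega,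
      hμ (k + 2) (by omega) hn, hμ (k + 1) (by omega) (by omega)]
    refine sub_mem
      (supported_mono ?_ (T_sq_mul_T_neg_one_add_C_mul_mem_supported_Icc x
        (hd _ (by omega) hn) (ih₁ (by omega))))
      (supported_mono ?_ (T_mul_T_mul_C_mul_T_neg_one_mul_mem_supported_Icc x _ _
        (ih₀ (by omega)))) <;>
    · rw [hsum (k + 1), hsum k, show k + 1 + 1 = k + 2 from rfl]
      exact Set.Icc_subset_Icc (by push_cast; omega) (by omega)

end LaurentPolynomial

theorem stmt_8_general (p : ℕ)
    (ε : ℕ → ℤ)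
    (μ : ℕ → LaurentPolynomial (LaurentPolynomial ℚ))
    (hμ : ∀ i, μ i = if 1 ≤ i ∧ i ≤ p - 1 then (if ε i = 1 then 1 else T 1) else 0)
    (Cp : ℕ → LaurentPolynomial (LaurentPolynomial ℚ))
    (hC0 : Cp 0 = 1)
    (hC1 : Cp 1 = μ 1 ^ 2 * T (-1) + LaurentPolynomial.C (T 1))
    (hCk : ∀ k, 2 ≤ k → Cp k =
      (μ k ^ 2 * T (-1) + LaurentPolynomial.C (T 1)) * Cp (k - 1) -
      (μ (k - 1) * μ k * LaurentPolynomial.C (T 1) * T (-1)) * Cp (k - 2))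
    (α : ℕ → ℕ) (hα : ∀ k, α k = ((Finset.Icc 1 k).filter (fun i => ε i = 1)).card) :
    ∀ k, k ≤ p - 1 →
      ∃ c : ℕ → LaurentPolynomial ℚ,
        Cp k = ∑ i ∈ Finset.range (k + 1),
          LaurentPolynomial.C (c i) * T ((i : ℤ) - (α k : ℤ)) := by
  set d : ℕ → ℤ := fun i => if ε i = 1 then 0 else 1
  have hd01 : ∀ i, 0 ≤ d i ∧ d i ≤ 1 := fun i => by simp only [d]; split_ifs <;> simp
  have hμd : ∀ i, 1 ≤ i → i ≤ p - 1 → μ i = T (d i) := fun i h₁ h₂ => by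
    rw [hμ, if_pos ⟨h₁, h₂⟩]; split_ifs with h <;> simp [d, h, T_zero]
  have hβ : ∀ k, ∑ i ∈ Icc 1 k, d i = k - α k := fun k => by
    rw [hα, sum_ite, sum_const_zero, zero_add, sum_const, nsmul_one, eq_sub_iff_add_eq,
      ← Nat.cast_add, add_comm, card_filter_add_card_filter_not, Nat.card_Icc,
      Nat.add_sub_cancel]
  intro k hk
  have hCk_mem := mem_supported_Icc_of_recurrence (T 1) (p - 1) d (fun i _ _ => hd01 i)
    μ hμd Cp hC0 hC1 hCk k hk
  rw [hβ, sub_sub_cancel_left, sub_eq_neg_add] at hCk_mem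
  exact ⟨fun i => (Cp k).coeff (-α k + i),
    (eq_sum_of_mem_supported_Icc hCk_mem).trans (by simp only [neg_add_eq_sub])⟩

/-- Working in the Laurent polynomial ring `ℚ[x,x⁻¹][t,t⁻¹]`, with `t` the outer
variable `T 1` and `x` the inner variable `C (T 1)`. -/
theorem stmt_8 (p : ℕ) (hp : 2 ≤ p)
    (ε : ℕ → ℤ) (hε : ∀ i, 1 ≤ i → i ≤ p - 1 → ε i = 1 ∨ ε i = -1)
    (μ : ℕ → LaurentPolynomial (LaurentPolynomial ℚ))
    (hμ : ∀ i, μ i = if 1 ≤ i ∧ i ≤ p - 1 then (if ε i = 1 then 1 else T 1) else 0)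
    (Cp : ℕ → LaurentPolynomial (LaurentPolynomial ℚ))
    (hC0 : Cp 0 = 1)
    (hC1 : Cp 1 = μ 1 ^ 2 * T (-1) + LaurentPolynomial.C (T 1))
    (hCk : ∀ k, 2 ≤ k → Cp k =
      (μ k ^ 2 * T (-1) + LaurentPolynomial.C (T 1)) * Cp (k - 1) -
      (μ (k - 1) * μ k * LaurentPolynomial.C (T 1) * T (-1)) * Cp (k - 2))
    (α : ℕ → ℕ) (hα : ∀ k, α k = ((Finset.Icc 1 k).filter (fun i => ε i = 1)).card) :
    ∀ k, k ≤ p - 1 →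
      ∃ c : ℕ → LaurentPolynomial ℚ,
        Cp k = ∑ i ∈ Finset.range (k + 1),
          LaurentPolynomial.C (c i) * T ((i : ℤ) - (α k : ℤ)) :=
  stmt_8_general p ε μ hμ Cp hC0 hC1 hCk α hα
end

section
/- With the recursively defined Laurent polynomials C_k(x,t) as above (C₀ = 1, C₁ = μ(1)²/t + x, C_k = (μ(k)²/t + x)C_{k−1} − (μ(k−1)μ(k)x/t)C_{k−2}), writing C_k = ∑_{i=0}^{k} C_k^i(x) t^(i−α_k), the lowest coefficient satisfies C_k^0(x) = x^(β_k) and the highest coefficient satisfies C_k^k(x) = x^(α_k), where α_k is the number of +1 entries and β_k the number of −1 entries among ε₁,…,ε_k. -/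
/-!
Put `x = C (T 1)` and `eᵢ = 1` if `εᵢ = 1`, `eᵢ = 0` otherwise, so that `μ(i) = t ^ (1 - eᵢ)`.
The normalised sequence `D_k = t ^ α_k · C_k` then satisfies the polynomial recurrence
`D_k = (t ^ (1 - e_k) + x t ^ e_k) D_{k-1} - x t D_{k-2}`, whose factor is `1 + x t` when
`ε_k = 1` and `t + x` when `ε_k = -1`. By induction `D_k` has degree at most `k`, and the
subtracted term `x t D_{k-2}` has zero constant term and degree below `k`; so the constant and the
`t ^ k` coefficient of `D_k` are the products of the constant, resp. linear, coefficients of the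
factors, namely `x ^ β_k` and `x ^ α_k`.
-/

open Finset LaurentPolynomial

open Polynomial in
noncomputable def threeTermRec {R : Type*} [CommRing R] (f : ℕ → R[X]) (g : R[X]) : ℕ → R[X]
  | 0 => 1
  | 1 => f 1
  | k + 2 => f (k + 2) * threeTermRec f g (k + 1) - g * threeTermRec f g k

namespace threeTermRec

open Polynomial

variable {R : Type*} [CommRing R] {f : ℕ → R[X]} {g : R[X]}

theorem natDegree_le (hf : ∀ i, (f i).natDegree ≤ 1) (hg : g.natDegree ≤ 1) (k : ℕ) :
    (threeTermRec f g k).natDegree ≤ k := by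
  induction k using Nat.twoStepInduction with
  | zero => simp [threeTermRec]
  | one => exact hf 1
  | more k ih₀ ih₁ =>
    refine (natDegree_sub_le _ _).trans (max_le ?_ ?_)
    · exact natDegree_mul_le.trans (by linarith [hf (k + 2)])
    · exact natDegree_mul_le.trans (by linarith)

theorem coeff_zero (hg : g.coeff 0 = 0) (k : ℕ) :
    (threeTermRec f g k).coeff 0 = ∏ i ∈ Icc 1 k, (f i).coeff 0 := by
  induction k using Nat.twoStepInduction with
  | zero => simp [threeTermRec]
  | one => simp [threeTermRec]
  | more k _ ih =>
    rw [threeTermRec, coeff_sub, mul_coeff_zero, mul_coeff_zero, hg, zero_mul, sub_zero, ih,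
      prod_Icc_succ_top (b := k + 1) (by omega), mul_comm]

theorem coeff_self (hf : ∀ i, (f i).natDegree ≤ 1) (hg : g.natDegree ≤ 1) (k : ℕ) :
    (threeTermRec f g k).coeff k = ∏ i ∈ Icc 1 k, (f i).coeff 1 := by
  induction k using Nat.twoStepInduction with
  | zero => simp [threeTermRec]
  | one => simp [threeTermRec]
  | more k _ ih =>
    have hlow : (g * threeTermRec f g k).coeff (k + 2) = 0 :=
      coeff_eq_zero_of_natDegree_lt <|
        natDegree_mul_le.trans_lt (by linarith [natDegree_le hf hg k])
    rw [threeTermRec, coeff_sub, hlow, sub_zero, add_comm k 2,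
      show 2 + k = 1 + (k + 1) by omega,
      coeff_mul_add_eq_of_natDegree_le (hf _) (natDegree_le hf hg _), add_comm 1 (k + 1), ih,
      prod_Icc_succ_top (b := k + 1) (by omega), mul_comm]

end threeTermRec

section Laurent

open Polynomial

variable {R : Type*} [CommRing R]

theorem eq_T_mul_toLaurent_threeTermRec {x : R} {e a : ℕ → ℤ} {f : ℕ → R[X]}
    {μ Cp : ℕ → R[T;T⁻¹]} {n : ℕ} (ha₀ : a 0 = 0) (ha : ∀ i, a (i + 1) = a i + e (i + 1))
    (hf : ∀ i, toLaurent (f i) = T (1 - e i) + LaurentPolynomial.C x * T (e i))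
    (hμ : ∀ i, 1 ≤ i → i ≤ n → μ i = T (1 - e i))
    (hC0 : Cp 0 = 1) (hC1 : Cp 1 = μ 1 ^ 2 * T (-1) + LaurentPolynomial.C x)
    (hCk : ∀ k, 2 ≤ k → Cp k =
      (μ k ^ 2 * T (-1) + LaurentPolynomial.C x) * Cp (k - 1) -
      (μ (k - 1) * μ k * LaurentPolynomial.C x * T (-1)) * Cp (k - 2)) (k : ℕ) (hk : k ≤ n) :
    Cp k = T (-a k) * toLaurent (threeTermRec f (Polynomial.C x * X) k) := by
  have hfactor (a e : ℤ) : (T (1 - e) ^ 2 * T (-1) + LaurentPolynomial.C x) * T (-a) =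
      T (-(a + e)) * (T (1 - e) + LaurentPolynomial.C x * T e) := by
    simp only [T_pow, mul_add, add_mul, mul_left_comm (T _) (LaurentPolynomial.C x), ← T_add]
    ring_nf
  have hcoupling (a e₁ e₂ : ℤ) :
      T (1 - e₁) * T (1 - e₂) * LaurentPolynomial.C x * T (-1) * T (-a) =
        T (-(a + e₁ + e₂)) * (LaurentPolynomial.C x * T 1) := by
    simp only [mul_assoc, mul_left_comm (T _) (LaurentPolynomial.C x), ← T_add]
    ring_nf
  induction k using Nat.twoStepInduction with
  | zero => simp [hC0, ha₀, threeTermRec]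
  | one =>
    have h := hfactor 0 (e 1)
    rw [neg_zero, T_zero, mul_one, zero_add] at h
    rw [hC1, hμ 1 le_rfl hk, h, threeTermRec, hf, ha, ha₀, zero_add]
  | more k ih₀ ih₁ =>
    rw [hCk (k + 2) (by omega), show k + 2 - 1 = k + 1 from rfl, Nat.add_sub_cancel,
      ih₁ (by omega), ih₀ (by omega), hμ (k + 1) (by omega) (by omega), hμ (k + 2) (by omega) hk,
      ← mul_assoc, ← mul_assoc, hfactor, hcoupling, threeTermRec, ha (k + 1), ha k]
    simp only [map_sub, map_mul, hf, toLaurent_C, toLaurent_X]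
    ring

end Laurent

section Signs

open Polynomial

variable {R : Type*} [CommRing R]

noncomputable def signFactor (ε : ℕ → ℤ) (x : R) (i : ℕ) : R[X] :=
  if ε i = 1 then 1 + Polynomial.C x * X else X + Polynomial.C x

variable (ε : ℕ → ℤ) (x : R)

theorem natDegree_signFactor_le (i : ℕ) : (signFactor ε x i).natDegree ≤ 1 := by
  unfold signFactor; split <;> compute_degree

theorem toLaurent_signFactor (i : ℕ) :
    toLaurent (signFactor ε x i) =
      T (1 - if ε i = 1 then 1 else 0) + LaurentPolynomial.C x * T (if ε i = 1 then 1 else 0) := by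
  unfold signFactor; split <;> simp

theorem prod_coeff_zero_signFactor (k : ℕ) :
    ∏ i ∈ Icc 1 k, (signFactor ε x i).coeff 0 = x ^ (k - #{i ∈ Icc 1 k | ε i = 1}) := by
  have hcard := card_filter_add_card_filter_not (s := Icc 1 k) (fun i ↦ ε i = 1)
  rw [Nat.card_Icc, Nat.add_sub_cancel] at hcard
  have hcoeff (i : ℕ) : (signFactor ε x i).coeff 0 = if ε i = 1 then 1 else x := by
    unfold signFactor; split <;> simp
  simp only [hcoeff, prod_ite, prod_const_one, one_mul, prod_const]
  congr 1; omega

theorem prod_coeff_one_signFactor (k : ℕ) :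
    ∏ i ∈ Icc 1 k, (signFactor ε x i).coeff 1 = x ^ #{i ∈ Icc 1 k | ε i = 1} := by
  have hcoeff (i : ℕ) : (signFactor ε x i).coeff 1 = if ε i = 1 then x else 1 := by
    unfold signFactor; split <;> simp [coeff_one]
  simp only [hcoeff, prod_ite, prod_const_one, mul_one, prod_const]

theorem card_filter_Icc_succ (k : ℕ) :
    (#{i ∈ Icc 1 (k + 1) | ε i = 1} : ℤ) =
      #{i ∈ Icc 1 k | ε i = 1} + if ε (k + 1) = 1 then 1 else 0 := by
  rw [card_filter, card_filter, sum_Icc_succ_top (by omega)]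
  push_cast; rfl

end Signs

open Polynomial in
theorem coeff_eq_of_T_mul_toLaurent_eq_sum {R : Type*} [CommRing R] {D : R[X]} {a : ℤ} {k : ℕ}
    {c : ℕ → R}
    (h : T (-a) * toLaurent D = ∑ i ∈ range (k + 1), LaurentPolynomial.C (c i) * T (i - a))
    {j : ℕ} (hj : j ≤ k) : D.coeff j = c j := by
  have hD : toLaurent D = toLaurent (∑ i ∈ range (k + 1), Polynomial.C (c i) * X ^ i) := by
    calc toLaurent D = T a * (T (-a) * toLaurent D) := by
          rw [← mul_assoc, ← T_add, add_neg_cancel, T_zero, one_mul]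
      _ = _ := by
          simp only [h, mul_sum, map_sum, toLaurent_C_mul_X_pow, mul_left_comm (T a), ← T_add]
          ring_nf
  rw [toLaurent_injective hD, finsetSum_coeff]
  simp [Nat.lt_succ_of_le hj]

/-- `t` is the outer variable `T 1` and `x` the inner variable `C (T 1)` of `ℚ[x,x⁻¹][t,t⁻¹]`. -/
theorem stmt_9_general (p : ℕ)
    (ε : ℕ → ℤ)
    (μ : ℕ → LaurentPolynomial (LaurentPolynomial ℚ))
    (hμ : ∀ i, μ i = if 1 ≤ i ∧ i ≤ p - 1 then (if ε i = 1 then 1 else T 1) else 0)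
    (Cp : ℕ → LaurentPolynomial (LaurentPolynomial ℚ))
    (hC0 : Cp 0 = 1)
    (hC1 : Cp 1 = μ 1 ^ 2 * T (-1) + LaurentPolynomial.C (T 1))
    (hCk : ∀ k, 2 ≤ k → Cp k =
      (μ k ^ 2 * T (-1) + LaurentPolynomial.C (T 1)) * Cp (k - 1) -
      (μ (k - 1) * μ k * LaurentPolynomial.C (T 1) * T (-1)) * Cp (k - 2))
    (α β : ℕ → ℕ)
    (hα : ∀ k, α k = ((Finset.Icc 1 k).filter (fun i => ε i = 1)).card)
    (hβ : ∀ k, β k = k - α k) :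
    ∀ k, 1 ≤ k → k ≤ p - 1 →
      ∀ c : ℕ → LaurentPolynomial ℚ,
        Cp k = (∑ i ∈ Finset.range (k + 1),
            LaurentPolynomial.C (c i) * T ((i : ℤ) - (α k : ℤ))) →
        c 0 = T (β k : ℤ) ∧ c k = T (α k : ℤ) := by
  intro k _ hk c hsum
  have hμT (i : ℕ) (hi₁ : 1 ≤ i) (hi : i ≤ p - 1) :
      μ i = T (1 - if ε i = 1 then 1 else 0) := by
    rw [hμ, if_pos ⟨hi₁, hi⟩]; split_ifs <;> simp
  have hCp := eq_T_mul_toLaurent_threeTermRec (a := fun k ↦ #{i ∈ Icc 1 k | ε i = 1})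
    (by simp) (card_filter_Icc_succ ε) (toLaurent_signFactor ε (T 1)) hμT hC0 hC1 hCk k hk
  simp only [hβ, hα] at hsum ⊢
  have hcoeff (j : ℕ) (hj : j ≤ k) := coeff_eq_of_T_mul_toLaurent_eq_sum (hCp ▸ hsum) hj
  have hf := natDegree_signFactor_le ε (T 1 : LaurentPolynomial ℚ)
  have hg : (Polynomial.C (T 1 : LaurentPolynomial ℚ) * Polynomial.X).natDegree ≤ 1 := by
    compute_degree
  constructor
  · rw [← hcoeff 0 (Nat.zero_le k), threeTermRec.coeff_zero (by simp),
      prod_coeff_zero_signFactor, T_pow, mul_one]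
  · rw [← hcoeff k le_rfl, threeTermRec.coeff_self hf hg, prod_coeff_one_signFactor, T_pow,
      mul_one]

/-- Working in the Laurent polynomial ring `ℚ[x,x⁻¹][t,t⁻¹]`, with `t` the outer
variable `T 1` and `x` the inner variable `C (T 1)`: the lowest coefficient of
`C_k` is `x ^ β_k` and the highest is `x ^ α_k`. -/
theorem stmt_9 (p : ℕ) (hp : 2 ≤ p)
    (ε : ℕ → ℤ) (hε : ∀ i, 1 ≤ i → i ≤ p - 1 → ε i = 1 ∨ ε i = -1)
    (μ : ℕ → LaurentPolynomial (LaurentPolynomial ℚ))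
    (hμ : ∀ i, μ i = if 1 ≤ i ∧ i ≤ p - 1 then (if ε i = 1 then 1 else T 1) else 0)
    (Cp : ℕ → LaurentPolynomial (LaurentPolynomial ℚ))
    (hC0 : Cp 0 = 1)
    (hC1 : Cp 1 = μ 1 ^ 2 * T (-1) + LaurentPolynomial.C (T 1))
    (hCk : ∀ k, 2 ≤ k → Cp k =
      (μ k ^ 2 * T (-1) + LaurentPolynomial.C (T 1)) * Cp (k - 1) -
      (μ (k - 1) * μ k * LaurentPolynomial.C (T 1) * T (-1)) * Cp (k - 2))
    (α β : ℕ → ℕ)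
    (hα : ∀ k, α k = ((Finset.Icc 1 k).filter (fun i => ε i = 1)).card)
    (hβ : ∀ k, β k = k - α k) :
    ∀ k, 1 ≤ k → k ≤ p - 1 →
      ∀ c : ℕ → LaurentPolynomial ℚ,
        Cp k = (∑ i ∈ Finset.range (k + 1),
            LaurentPolynomial.C (c i) * T ((i : ℤ) - (α k : ℤ))) →
        c 0 = T (β k : ℤ) ∧ c k = T (α k : ℤ) :=
  stmt_9_general p ε μ hμ Cp hC0 hC1 hCk α β hα hβ
end

section
/- With the recursively defined C_k(x,t) as above, writing C_k = ∑_{i=0}^{k} C_k^i(x) t^(i−α_k), the second-lowest coefficient satisfies C_k^1(x) = (A_k x − γ_k + B_k/x) · x^(β_k), where A_k and B_k are the numbers of maximal blocks of consecutive +1's and consecutive −1's respectively among ε₁,…,ε_k, and γ_k = A_k + B_k − 1 is the number of sign changes in (ε₁,…,ε_k). -/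
/-!
Multiplying by `t ^ α_k` turns `C_k` into a polynomial `D_k` in `t` with
`D_k = a_k D_{k-1} - x t D_{k-2}`, where `a_k = 1 + x t` if `ε_k = 1` and `a_k = t + x` if
`ε_k = -1`. Its constant coefficient is therefore `x ^ β_k`, and its linear coefficient obeys a
first-order recursion driven by the constant coefficients; in each of the four cases for
`(ε_{k-1}, ε_k)` the block and sign-change counts change exactly so as to match it.
-/

open Finset LaurentPolynomial

open Polynomial (X toLaurent)

open scoped Polynomial

section Counts

variable (ε : ℕ → ℤ)

def plusCount (k : ℕ) : ℕ := #{i ∈ Icc 1 k | ε i = 1}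

def minusCount (k : ℕ) : ℕ := #{i ∈ Icc 1 k | ε i ≠ 1}

def plusBlocks (k : ℕ) : ℕ := #{i ∈ Icc 1 k | ε i = 1 ∧ (i = 1 ∨ ε (i - 1) = -1)}

def minusBlocks (k : ℕ) : ℕ := #{i ∈ Icc 1 k | ε i = -1 ∧ (i = 1 ∨ ε (i - 1) = 1)}

def signChanges (k : ℕ) : ℕ := #{i ∈ Ico 1 k | ε i ≠ ε (i + 1)}

lemma card_filter_Icc_one_succ (P : ℕ → Prop) [DecidablePred P] (k : ℕ) :
    #{i ∈ Icc 1 (k + 1) | P i} = #{i ∈ Icc 1 k | P i} + if P (k + 1) then 1 else 0 := by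
  simp only [card_filter]
  exact sum_Icc_succ_top (by omega) _

lemma card_filter_Ico_one_succ (P : ℕ → Prop) [DecidablePred P] {k : ℕ} (hk : 1 ≤ k) :
    #{i ∈ Ico 1 (k + 1) | P i} = #{i ∈ Ico 1 k | P i} + if P k then 1 else 0 := by
  simp only [card_filter]
  exact sum_Ico_succ_top hk _

lemma plusCount_add_minusCount (k : ℕ) : plusCount ε k + minusCount ε k = k := by
  rw [plusCount, minusCount, card_filter_add_card_filter_not, Nat.card_Icc, Nat.add_sub_cancel]

lemma plusCount_succ (k : ℕ) :
    plusCount ε (k + 1) = plusCount ε k + if ε (k + 1) = 1 then 1 else 0 :=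
  card_filter_Icc_one_succ _ k

lemma minusCount_succ (k : ℕ) :
    minusCount ε (k + 1) = minusCount ε k + if ε (k + 1) = 1 then 0 else 1 := by
  rw [minusCount, card_filter_Icc_one_succ]
  simp only [ite_not, minusCount]

lemma plusBlocks_add_two (k : ℕ) :
    plusBlocks ε (k + 2) =
      plusBlocks ε (k + 1) + if ε (k + 2) = 1 ∧ ε (k + 1) = -1 then 1 else 0 := by
  rw [plusBlocks, card_filter_Icc_one_succ]
  simp [plusBlocks]

lemma minusBlocks_add_two (k : ℕ) :
    minusBlocks ε (k + 2) =
      minusBlocks ε (k + 1) + if ε (k + 2) = -1 ∧ ε (k + 1) = 1 then 1 else 0 := by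
  rw [minusBlocks, card_filter_Icc_one_succ]
  simp [minusBlocks]

lemma signChanges_add_two (k : ℕ) :
    signChanges ε (k + 2) = signChanges ε (k + 1) + if ε (k + 1) ≠ ε (k + 2) then 1 else 0 :=
  card_filter_Ico_one_succ _ (by omega)

end Counts

section Normalized

variable {R : Type*} [CommRing R]

noncomputable def normalizedFactor (x : R) (e : ℤ) : R[X] :=
  if e = 1 then 1 + Polynomial.C x * X else X + Polynomial.C x

-- `t ^ α_k * C_k`, as a polynomial in `t`: after this normalization the coefficient of
-- `C_{k-2}` in the recurrence becomes `x t` for all four sign patterns of `(ε_{k-1}, ε_k)`.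
noncomputable def normalizedC (x : R) (ε : ℕ → ℤ) : ℕ → R[X]
  | 0 => 1
  | 1 => normalizedFactor x (ε 1)
  | k + 2 => normalizedFactor x (ε (k + 2)) * normalizedC x ε (k + 1) -
      Polynomial.C x * X * normalizedC x ε k

lemma coeff_zero_normalizedFactor (x : R) (e : ℤ) :
    (normalizedFactor x e).coeff 0 = if e = 1 then 1 else x := by
  unfold normalizedFactor
  split_ifs <;> simp

lemma coeff_one_normalizedFactor_mul (x : R) (e : ℤ) (P : R[X]) :
    (normalizedFactor x e * P).coeff 1 =
      if e = 1 then P.coeff 1 + x * P.coeff 0 else P.coeff 0 + x * P.coeff 1 := by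
  unfold normalizedFactor
  split_ifs
  · rw [add_mul, one_mul, mul_assoc, Polynomial.coeff_add, Polynomial.coeff_C_mul,
      Polynomial.coeff_X_mul]
  · rw [add_mul, Polynomial.coeff_add, Polynomial.coeff_C_mul, Polynomial.coeff_X_mul]

lemma coeff_zero_normalizedC (x : R) (ε : ℕ → ℤ) (k : ℕ) :
    (normalizedC x ε k).coeff 0 = x ^ minusCount ε k := by
  induction k using Nat.twoStepInduction with
  | zero => simp [normalizedC, minusCount]
  | one =>
    rw [normalizedC, coeff_zero_normalizedFactor, minusCount_succ]
    simp [minusCount]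
  | more k _ ih =>
    rw [normalizedC, Polynomial.coeff_sub, Polynomial.mul_coeff_zero, ih,
      coeff_zero_normalizedFactor, minusCount_succ ε (k + 1), mul_assoc, Polynomial.coeff_C_mul,
      Polynomial.coeff_X_mul_zero, mul_zero, sub_zero]
    split_ifs <;> ring

lemma coeff_one_normalizedC (x : Rˣ) (ε : ℕ → ℤ) (k : ℕ)
    (hε : ∀ i, 1 ≤ i → i ≤ k → ε i = 1 ∨ ε i = -1) :
    (normalizedC (x : R) ε k).coeff 1 =
      (plusBlocks ε k * x - signChanges ε k + minusBlocks ε k * ↑x⁻¹) * x ^ minusCount ε k := by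
  induction k using Nat.twoStepInduction with
  | zero => simp [normalizedC, plusBlocks, minusBlocks, signChanges, Polynomial.coeff_one]
  | one =>
    rcases hε 1 le_rfl le_rfl with h | h <;>
      simp [normalizedC, normalizedFactor, plusBlocks, minusBlocks, signChanges, minusCount,
        filter_singleton, Polynomial.coeff_one, h]
  | more k _ ih =>
    rw [normalizedC, Polynomial.coeff_sub, coeff_one_normalizedFactor_mul, mul_assoc,
      Polynomial.coeff_C_mul, Polynomial.coeff_X_mul, ih fun i hi hik => hε i hi (by omega),
      coeff_zero_normalizedC, coeff_zero_normalizedC, plusBlocks_add_two, minusBlocks_add_two,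
      signChanges_add_two, minusCount_succ ε (k + 1), minusCount_succ ε k]
    rcases hε (k + 2) (by omega) le_rfl with h₂ | h₂ <;>
      rcases hε (k + 1) (by omega) (by omega) with h₁ | h₁ <;>
      norm_num [h₁, h₂]
    case inl.inr => ring
    case inr.inl => linear_combination (-(x : R) ^ minusCount ε k) * x.inv_mul
    case inr.inr => ring

end Normalized

section Laurent

variable {R : Type*} [CommRing R]

lemma ite_one_T_eq (e : ℤ) :
    (if e = 1 then 1 else T 1 : R[T;T⁻¹]) = T (1 - (if e = 1 then 1 else 0 : ℕ)) := by
  split_ifs <;> simp [T_zero]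

lemma toLaurent_normalizedFactor (x : R) (e : ℤ) :
    toLaurent (normalizedFactor x e) =
      T (if e = 1 then 1 else 0 : ℕ) * (T (1 - 2 * (if e = 1 then 1 else 0 : ℕ)) + C x) := by
  unfold normalizedFactor
  split_ifs
  · rw [mul_add, ← T_add]
    norm_num [T_zero]
  · simp [T_zero]

lemma recurrence_factor_mul_T_neg (x : R) (e : ℤ) (a : ℕ) :
    ((if e = 1 then 1 else T 1) ^ 2 * T (-1) + C x) * T (-a) =
      T (-(a + if e = 1 then 1 else 0 : ℕ)) * toLaurent (normalizedFactor x e) := by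
  rw [toLaurent_normalizedFactor, ite_one_T_eq, T_pow, ← T_add, ← mul_assoc, ← T_add]
  push_cast
  ring_nf

lemma recurrence_cross_factor_mul_T_neg (e₁ e₂ : ℤ) (a : ℕ) :
    (if e₁ = 1 then 1 else T 1 : R[T;T⁻¹]) * (if e₂ = 1 then 1 else T 1) * T (-1) * T (-a) =
      T (-(a + (if e₁ = 1 then 1 else 0) + (if e₂ = 1 then 1 else 0) : ℕ)) * T 1 := by
  rw [ite_one_T_eq, ite_one_T_eq, ← T_add, ← T_add, ← T_add, ← T_add]
  push_cast
  ring_nf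

theorem eq_T_mul_toLaurent_normalizedC (x : R) (ε : ℕ → ℤ) (n : ℕ) (μ : ℕ → R[T;T⁻¹])
    (hμ : ∀ i, 1 ≤ i → i ≤ n → μ i = if ε i = 1 then 1 else T 1)
    (Cp : ℕ → R[T;T⁻¹]) (h₀ : Cp 0 = 1) (h₁ : Cp 1 = μ 1 ^ 2 * T (-1) + C x)
    (hrec : ∀ k, k + 2 ≤ n → Cp (k + 2) =
      (μ (k + 2) ^ 2 * T (-1) + C x) * Cp (k + 1) - μ (k + 1) * μ (k + 2) * C x * T (-1) * Cp k)
    (k : ℕ) (hk : k ≤ n) :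
    Cp k = T (-plusCount ε k) * toLaurent (normalizedC x ε k) := by
  induction k using Nat.twoStepInduction with
  | zero => simp [h₀, normalizedC, plusCount, T_zero]
  | one =>
    have h := recurrence_factor_mul_T_neg x (ε 1) 0
    rw [Nat.cast_zero, neg_zero, T_zero, mul_one, zero_add] at h
    rw [h₁, hμ 1 le_rfl hk, h, normalizedC, (plusCount_succ ε 0 : plusCount ε 1 = _)]
    simp [plusCount]
  | more k ih₀ ih₁ =>
    rw [hrec k hk, ih₀ (by omega), ih₁ (by omega), hμ (k + 1) (by omega) (by omega),
      hμ (k + 2) (by omega) hk, normalizedC, plusCount_succ ε (k + 1), plusCount_succ ε k]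
    simp only [map_sub, map_mul, Polynomial.toLaurent_C, Polynomial.toLaurent_X]
    linear_combination toLaurent (normalizedC x ε (k + 1)) *
        recurrence_factor_mul_T_neg x (ε (k + 2))
          (plusCount ε k + if ε (k + 1) = 1 then 1 else 0) -
      C x * toLaurent (normalizedC x ε k) *
        recurrence_cross_factor_mul_T_neg (R := R) (ε (k + 1)) (ε (k + 2)) (plusCount ε k)

end Laurent

/-- In `ℚ[x,x⁻¹][t,t⁻¹]` the outer variable `t` is `T 1` and `x` is `C (T 1)`. -/
theorem stmt_10_general (p : ℕ)
    (ε : ℕ → ℤ) (hε : ∀ i, 1 ≤ i → i ≤ p - 1 → ε i = 1 ∨ ε i = -1)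
    (μ : ℕ → LaurentPolynomial (LaurentPolynomial ℚ))
    (hμ : ∀ i, μ i = if 1 ≤ i ∧ i ≤ p - 1 then (if ε i = 1 then 1 else T 1) else 0)
    (Cp : ℕ → LaurentPolynomial (LaurentPolynomial ℚ))
    (hC0 : Cp 0 = 1)
    (hC1 : Cp 1 = μ 1 ^ 2 * T (-1) + LaurentPolynomial.C (T 1))
    (hCk : ∀ k, 2 ≤ k → Cp k =
      (μ k ^ 2 * T (-1) + LaurentPolynomial.C (T 1)) * Cp (k - 1) -
      (μ (k - 1) * μ k * LaurentPolynomial.C (T 1) * T (-1)) * Cp (k - 2))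
    (α β A B γ : ℕ → ℕ)
    (hα : ∀ k, α k = ((Finset.Icc 1 k).filter (fun i => ε i = 1)).card)
    (hβ : ∀ k, β k = k - α k)
    (hA : ∀ k, A k = ((Finset.Icc 1 k).filter
      (fun i => ε i = 1 ∧ (i = 1 ∨ ε (i - 1) = -1))).card)
    (hB : ∀ k, B k = ((Finset.Icc 1 k).filter
      (fun i => ε i = -1 ∧ (i = 1 ∨ ε (i - 1) = 1))).card)
    (hγ : ∀ k, γ k = ((Finset.Ico 1 k).filter (fun i => ε i ≠ ε (i + 1))).card) :
    ∀ k, 1 ≤ k → k ≤ p - 1 →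
      ∀ c : ℕ → LaurentPolynomial ℚ,
        Cp k = (∑ i ∈ Finset.range (k + 1),
            LaurentPolynomial.C (c i) * T ((i : ℤ) - (α k : ℤ))) →
        c 1 = ((A k : LaurentPolynomial ℚ) * T 1 - (γ k : LaurentPolynomial ℚ) +
            (B k : LaurentPolynomial ℚ) * T (-1)) * T (β k : ℤ) := by
  intro k hk₁ hkp c hc
  obtain rfl : α = plusCount ε := funext hα
  obtain rfl : β = minusCount ε :=
    funext fun k => by have := plusCount_add_minusCount ε k; rw [hβ]; omega
  obtain rfl : A = plusBlocks ε := funext hA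
  obtain rfl : B = minusBlocks ε := funext hB
  obtain rfl : γ = signChanges ε := funext hγ
  have hCp := eq_T_mul_toLaurent_normalizedC (T 1) ε (p - 1) μ
    (fun i h₁ h₂ => by rw [hμ, if_pos ⟨h₁, h₂⟩]) Cp hC0 hC1
    (fun k hk => by simpa using hCk (k + 2) (by omega)) k hkp
  have hpoly : normalizedC (T 1) ε k = ∑ i ∈ range (k + 1), Polynomial.C (c i) * X ^ i := by
    apply Polynomial.toLaurent_injective
    apply (isUnit_T (-(plusCount ε k : ℤ))).mul_left_cancel
    rw [← hCp, hc, map_sum, mul_sum]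
    refine sum_congr rfl fun i _ => ?_
    rw [Polynomial.toLaurent_C_mul_X_pow, mul_left_comm, ← T_add, sub_eq_neg_add]
  let x : (LaurentPolynomial ℚ)ˣ :=
    ⟨T 1, T (-1), by rw [← T_add, add_neg_cancel, T_zero], by rw [← T_add, neg_add_cancel, T_zero]⟩
  have h := coeff_one_normalizedC x ε k fun i h₁ h₂ => hε i h₁ (by omega)
  rw [hpoly] at h
  simpa [x, T_pow, Polynomial.finsetSum_coeff, Polynomial.coeff_C_mul_X_pow, show 0 < k by omega]
    using h

/-- Working in the Laurent polynomial ring `ℚ[x,x⁻¹][t,t⁻¹]`, with `t` the outer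
variable `T 1` and `x` the inner variable `C (T 1)`: the second-lowest coefficient
of `C_k` is `(A_k x - γ_k + B_k x⁻¹) x ^ β_k`, where `A_k`, `B_k` count maximal
blocks of `+1`'s and `-1`'s and `γ_k` counts sign changes among `ε₁, …, ε_k`. -/
theorem stmt_10 (p : ℕ) (hp : 2 ≤ p)
    (ε : ℕ → ℤ) (hε : ∀ i, 1 ≤ i → i ≤ p - 1 → ε i = 1 ∨ ε i = -1)
    (μ : ℕ → LaurentPolynomial (LaurentPolynomial ℚ))
    (hμ : ∀ i, μ i = if 1 ≤ i ∧ i ≤ p - 1 then (if ε i = 1 then 1 else T 1) else 0)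
    (Cp : ℕ → LaurentPolynomial (LaurentPolynomial ℚ))
    (hC0 : Cp 0 = 1)
    (hC1 : Cp 1 = μ 1 ^ 2 * T (-1) + LaurentPolynomial.C (T 1))
    (hCk : ∀ k, 2 ≤ k → Cp k =
      (μ k ^ 2 * T (-1) + LaurentPolynomial.C (T 1)) * Cp (k - 1) -
      (μ (k - 1) * μ k * LaurentPolynomial.C (T 1) * T (-1)) * Cp (k - 2))
    (α β A B γ : ℕ → ℕ)
    (hα : ∀ k, α k = ((Finset.Icc 1 k).filter (fun i => ε i = 1)).card)
    (hβ : ∀ k, β k = k - α k)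
    (hA : ∀ k, A k = ((Finset.Icc 1 k).filter
      (fun i => ε i = 1 ∧ (i = 1 ∨ ε (i - 1) = -1))).card)
    (hB : ∀ k, B k = ((Finset.Icc 1 k).filter
      (fun i => ε i = -1 ∧ (i = 1 ∨ ε (i - 1) = 1))).card)
    (hγ : ∀ k, γ k = ((Finset.Ico 1 k).filter (fun i => ε i ≠ ε (i + 1))).card) :
    ∀ k, 1 ≤ k → k ≤ p - 1 →
      ∀ c : ℕ → LaurentPolynomial ℚ,
        Cp k = (∑ i ∈ Finset.range (k + 1),
            LaurentPolynomial.C (c i) * T ((i : ℤ) - (α k : ℤ))) →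
        c 1 = ((A k : LaurentPolynomial ℚ) * T 1 - (γ k : LaurentPolynomial ℚ) +
            (B k : LaurentPolynomial ℚ) * T (-1)) * T (β k : ℤ) :=
  stmt_10_general p ε hε μ hμ Cp hC0 hC1 hCk α β A B γ hα hβ hA hB hγ
end
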